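/- arXiv:1408.3394 — 3 statements merged into one kernel-verified Lean document; each statement's English description precedes it below -/
import Mathlib

section
/- Let f, g : ℕ → ℝ be multiplicative functions with ∑ |f(d)|/d < ∞ and ∑ |g(d)|/d < ∞, and let h₁ be a positive integer. Then ∑_{gcd(d,d₁)=h₁} f(d)g(d₁)/(d·d₁) = T(h₁) · ∑_{gcd(d,d₁)=1} f(d)g(d₁)/(d·d₁), where T is the multiplicative function defined on prime powers by T(p^k) = S_p(p^k)/S_p(1) with S_p(p^i) := ∑_{min{e₁,e₂}=i} f(p^{e₁})g(p^{e₂})/p^{e₁+e₂}. -/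
/-- `Spair f g p i = ∑_{min(e₁,e₂)=i} f(p^{e₁}) g(p^{e₂}) / p^{e₁+e₂}`. -/
noncomputable def Spair (f g : ℕ → ℝ) (p : ℕ) (i : ℕ) : ℝ :=
  ∑' e : ℕ × ℕ, if min e.1 e.2 = i then f (p ^ e.1) * g (p ^ e.2) / (p : ℝ) ^ (e.1 + e.2) else 0

/-- `T h₁ = ∏_{p ∣ h₁} S_p(p^{ν_p(h₁)}) / S_p(1)`. -/
noncomputable def Tfun (f g : ℕ → ℝ) (h₁ : ℕ) : ℝ :=
  ∏ p ∈ h₁.primeFactors, Spair f g p (h₁.factorization p) / Spair f g p 0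


noncomputable def Ff (f : ℕ → ℝ) (n : ℕ) : ℝ := if n = 0 then 0 else |f n| / n

lemma Ff_nonneg (f : ℕ → ℝ) (n : ℕ) : 0 ≤ Ff f n := by
  unfold Ff; split
  · exact le_refl 0
  · positivity

lemma summable_Ff (f : ℕ → ℝ) (hfs : Summable fun d : ℕ => |f (d + 1)| / (d + 1)) :
    Summable (Ff f) := by
  rw [← summable_nat_add_iff 1]
  refine hfs.congr fun d => ?_
  simp only [Ff, Nat.succ_ne_zero, if_false]
  push_cast
  ring

lemma abs_div_mul_aux {a b x y : ℝ} (hx : 0 ≤ x) (hy : 0 ≤ y) :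
    |a * b / (x * y)| = |a| / x * (|b| / y) := by
  rw [abs_div, abs_mul, abs_mul, abs_of_nonneg hx, abs_of_nonneg hy, div_mul_div_comm]

lemma gcd_pow_mul {p : ℕ} (hp : p.Prime) (e₁ e₂ : ℕ) {d d₁ : ℕ} (hd : ¬ p ∣ d) (hd₁ : ¬ p ∣ d₁) :
    Nat.gcd (p ^ e₁ * d) (p ^ e₂ * d₁) = p ^ min e₁ e₂ * Nat.gcd d d₁ := by
  rcases le_total e₁ e₂ with hle | hle
  · obtain ⟨k, rfl⟩ := Nat.exists_eq_add_of_le hle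
    rw [min_eq_left (Nat.le_add_right e₁ k), pow_add, mul_assoc, Nat.gcd_mul_left]
    congr 1
    exact Nat.Coprime.gcd_mul_left_cancel_right d₁ (((hp.coprime_iff_not_dvd).mpr hd).pow_left k)
  · obtain ⟨k, rfl⟩ := Nat.exists_eq_add_of_le hle
    rw [min_eq_right (Nat.le_add_right e₂ k), pow_add, mul_assoc, Nat.gcd_mul_left]
    congr 1
    exact Nat.Coprime.gcd_mul_left_cancel d (((hp.coprime_iff_not_dvd).mpr hd₁).pow_left k)

lemma fact_pow_mul {p : ℕ} (hp : p.Prime) (e : ℕ) {d : ℕ} (hd : ¬ p ∣ d) :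
    (p ^ e * d).factorization p = e := by
  have hd0 : d ≠ 0 := by rintro rfl; exact hd (dvd_zero p)
  rw [Nat.factorization_mul (pow_ne_zero e hp.pos.ne') hd0, Finsupp.add_apply,
    hp.factorization_pow, Finsupp.single_eq_same, Nat.factorization_eq_zero_of_not_dvd hd, Nat.add_zero]

lemma pow_mul_inj {p : ℕ} (hp : p.Prime) {e d e' d' : ℕ} (hd : ¬ p ∣ d) (hd' : ¬ p ∣ d')
    (heq : p ^ e * d = p ^ e' * d') : e = e' ∧ d = d' := by
  have he : e = e' := by
    have h1 := fact_pow_mul hp e hd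
    have h2 := fact_pow_mul hp e' hd'
    rw [heq, h2] at h1
    exact h1.symm
  subst he
  exact ⟨rfl, Nat.eq_of_mul_eq_mul_left (pow_pos hp.pos e) heq⟩
noncomputable def SpS (f g : ℕ → ℝ) (p α : ℕ) (e : ℕ × ℕ) : ℝ :=
  if min e.1 e.2 = α then f (p ^ e.1) * g (p ^ e.2) / (p : ℝ) ^ (e.1 + e.2) else 0

noncomputable def BS (f g : ℕ → ℝ) (p h : ℕ) (dd : ℕ × ℕ) : ℝ :=
  if 1 ≤ dd.1 ∧ 1 ≤ dd.2 ∧ Nat.gcd dd.1 dd.2 = h ∧ ¬ p ∣ dd.1 ∧ ¬ p ∣ dd.2 then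
    f dd.1 * g dd.2 / ((dd.1 : ℝ) * dd.2) else 0

noncomputable def AS (f g : ℕ → ℝ) (h : ℕ) (dd : ℕ × ℕ) : ℝ :=
  if 1 ≤ dd.1 ∧ 1 ≤ dd.2 ∧ Nat.gcd dd.1 dd.2 = h then
    f dd.1 * g dd.2 / ((dd.1 : ℝ) * dd.2) else 0

noncomputable def Asum (f g : ℕ → ℝ) (h : ℕ) : ℝ := ∑' dd : ℕ × ℕ, AS f g h dd

noncomputable def Bsum (f g : ℕ → ℝ) (p h : ℕ) : ℝ := ∑' dd : ℕ × ℕ, BS f g p h dd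

lemma summable_sp_norm (f g : ℕ → ℝ)
    (hfs : Summable fun d : ℕ => |f (d + 1)| / (d + 1))
    (hgs : Summable fun d : ℕ => |g (d + 1)| / (d + 1))
    {p : ℕ} (hp : p.Prime) (α : ℕ) :
    Summable fun e : ℕ × ℕ => ‖SpS f g p α e‖ := by
  have h1 : Summable fun e : ℕ => Ff f (p ^ e) :=
    (summable_Ff f hfs).comp_injective (Nat.pow_right_injective hp.two_le)
  have h2 : Summable fun e : ℕ => Ff g (p ^ e) :=
    (summable_Ff g hgs).comp_injective (Nat.pow_right_injective hp.two_le)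
  refine Summable.of_nonneg_of_le (fun e => norm_nonneg _) (fun e => ?_)
    (h1.mul_of_nonneg h2 (fun e => Ff_nonneg f _) (fun e => Ff_nonneg g _))
  rw [Real.norm_eq_abs, SpS]
  split
  · refine le_of_eq ?_
    rw [Ff, Ff, if_neg (pow_ne_zero _ hp.pos.ne'), if_neg (pow_ne_zero _ hp.pos.ne'),
      pow_add, abs_div_mul_aux (by positivity) (by positivity)]
    push_cast
    ring
  · rw [abs_zero]
    exact mul_nonneg (Ff_nonneg f _) (Ff_nonneg g _)

lemma summable_bs_norm (f g : ℕ → ℝ)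
    (hfs : Summable fun d : ℕ => |f (d + 1)| / (d + 1))
    (hgs : Summable fun d : ℕ => |g (d + 1)| / (d + 1))
    (p h : ℕ) :
    Summable fun dd : ℕ × ℕ => ‖BS f g p h dd‖ := by
  refine Summable.of_nonneg_of_le (fun e => norm_nonneg _) (fun dd => ?_)
    (((summable_Ff f hfs).mul_of_nonneg (summable_Ff g hgs)
      (fun e => Ff_nonneg f _) (fun e => Ff_nonneg g _)))
  rw [Real.norm_eq_abs, BS]
  split_ifs with hc
  · obtain ⟨h1, h2, -⟩ := hc
    refine le_of_eq ?_
    rw [Ff, Ff, if_neg (Nat.one_le_iff_ne_zero.mp h1), if_neg (Nat.one_le_iff_ne_zero.mp h2),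
      abs_div_mul_aux (by positivity) (by positivity)]
  · rw [abs_zero]
    exact mul_nonneg (Ff_nonneg f _) (Ff_nonneg g _)

lemma Avalue (f g : ℕ → ℝ)
    (hf : ∀ m n : ℕ, Nat.Coprime m n → f (m * n) = f m * f n)
    (hg : ∀ m n : ℕ, Nat.Coprime m n → g (m * n) = g m * g n)
    {p : ℕ} (hp : p.Prime) {e₁ e₂ d d₁ : ℕ} (hd : ¬ p ∣ d) (hd₁ : ¬ p ∣ d₁)
    (hd0 : 1 ≤ d) (hd₁0 : 1 ≤ d₁) :
    f (p ^ e₁ * d) * g (p ^ e₂ * d₁) / ((↑(p ^ e₁ * d) : ℝ) * ↑(p ^ e₂ * d₁)) =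
      f (p ^ e₁) * g (p ^ e₂) / (p : ℝ) ^ (e₁ + e₂) * (f d * g d₁ / ((d : ℝ) * d₁)) := by
  rw [hf _ _ (((hp.coprime_iff_not_dvd).mpr hd).pow_left e₁),
     hg _ _ (((hp.coprime_iff_not_dvd).mpr hd₁).pow_left e₂)]
  have hp0 : (p : ℝ) ≠ 0 := Nat.cast_ne_zero.mpr hp.pos.ne'
  have hd0' : (d : ℝ) ≠ 0 := Nat.cast_ne_zero.mpr (Nat.one_le_iff_ne_zero.mp hd0)
  have hd₁0' : (d₁ : ℝ) ≠ 0 := Nat.cast_ne_zero.mpr (Nat.one_le_iff_ne_zero.mp hd₁0)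
  push_cast
  field_simp
  ring
lemma step_lemma (f g : ℕ → ℝ)
    (hf : ∀ m n : ℕ, Nat.Coprime m n → f (m * n) = f m * f n)
    (hg : ∀ m n : ℕ, Nat.Coprime m n → g (m * n) = g m * g n)
    (hfs : Summable fun d : ℕ => |f (d + 1)| / (d + 1))
    (hgs : Summable fun d : ℕ => |g (d + 1)| / (d + 1))
    {p : ℕ} (hp : p.Prime) (α h : ℕ) (hph : ¬ p ∣ h) :
    Asum f g (p ^ α * h) = Spair f g p α * Bsum f g p h := by
  have key : Spair f g p α * Bsum f g p h
      = ∑' z : (ℕ × ℕ) × (ℕ × ℕ), SpS f g p α z.1 * BS f g p h z.2 :=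
    tsum_mul_tsum_of_summable_norm (summable_sp_norm f g hfs hgs hp α)
      (summable_bs_norm f g hfs hgs p h)
  rw [key]
  have hsupp : ∀ z : (ℕ × ℕ) × (ℕ × ℕ), SpS f g p α z.1 * BS f g p h z.2 ≠ 0 →
      min z.1.1 z.1.2 = α ∧ 1 ≤ z.2.1 ∧ 1 ≤ z.2.2 ∧ Nat.gcd z.2.1 z.2.2 = h ∧
        ¬ p ∣ z.2.1 ∧ ¬ p ∣ z.2.2 := by
    intro z hz
    constructor
    · by_contra hc
      apply hz
      rw [SpS, if_neg hc, zero_mul]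
    · by_contra hc
      apply hz
      rw [BS, if_neg hc, mul_zero]
  refine tsum_eq_tsum_of_ne_zero_bij (f := AS f g (p ^ α * h))
    (fun z => (p ^ z.val.1.1 * z.val.2.1, p ^ z.val.1.2 * z.val.2.2)) ?_ ?_ ?_
  · rintro ⟨⟨⟨a, b⟩, c, e⟩, hz⟩ ⟨⟨⟨a', b'⟩, c', e'⟩, hz'⟩ hzz
    rw [Function.mem_support] at hz hz'
    obtain ⟨-, -, -, -, hpc, hpe⟩ := hsupp _ hz
    obtain ⟨-, -, -, -, hpc', hpe'⟩ := hsupp _ hz'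
    simp only [Prod.mk.injEq] at hzz
    obtain ⟨hA, hB⟩ := hzz
    obtain ⟨h1, h2⟩ := pow_mul_inj hp hpc hpc' hA
    obtain ⟨h3, h4⟩ := pow_mul_inj hp hpe hpe' hB
    apply Subtype.ext
    simp only [Prod.mk.injEq]
    exact ⟨⟨h1, h3⟩, h2, h4⟩
  · rintro ⟨n, n₁⟩ hn
    rw [Function.mem_support] at hn
    have hcond : 1 ≤ n ∧ 1 ≤ n₁ ∧ Nat.gcd n n₁ = p ^ α * h := by
      by_contra hc
      exact hn (if_neg hc)
    obtain ⟨hn1, hn11, hgcd⟩ := hcond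
    have hn0 : n ≠ 0 := Nat.one_le_iff_ne_zero.mp hn1
    have hn10 : n₁ ≠ 0 := Nat.one_le_iff_ne_zero.mp hn11
    set e₁ := n.factorization p with he₁
    set e₂ := n₁.factorization p with he₂
    set d := n / p ^ e₁ with hdd
    set d₁ := n₁ / p ^ e₂ with hdd₁
    have hnd : p ^ e₁ * d = n := Nat.ordProj_mul_ordCompl_eq_self n p
    have hn₁d : p ^ e₂ * d₁ = n₁ := Nat.ordProj_mul_ordCompl_eq_self n₁ p
    have hd : ¬ p ∣ d := Nat.not_dvd_ordCompl hp hn0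
    have hd₁ : ¬ p ∣ d₁ := Nat.not_dvd_ordCompl hp hn10
    have hd1 : 1 ≤ d := Nat.ordCompl_pos p hn0
    have hd₁1 : 1 ≤ d₁ := Nat.ordCompl_pos p hn10
    have hmin_gcd : p ^ min e₁ e₂ * Nat.gcd d d₁ = p ^ α * h := by
      rw [← gcd_pow_mul hp e₁ e₂ hd hd₁, hnd, hn₁d]
      exact hgcd
    have hgne : ¬ p ∣ Nat.gcd d d₁ := fun hdvd => hd (hdvd.trans (Nat.gcd_dvd_left d d₁))
    have hm : min e₁ e₂ = α := by
      have h1 : (p ^ min e₁ e₂ * Nat.gcd d d₁).factorization p = min e₁ e₂ :=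
        fact_pow_mul hp _ hgne
      rw [hmin_gcd, fact_pow_mul hp _ hph] at h1
      exact h1.symm
    have hg' : Nat.gcd d d₁ = h := by
      have h2 := hmin_gcd
      rw [hm] at h2
      exact Nat.eq_of_mul_eq_mul_left (pow_pos hp.pos α) h2
    have hv : SpS f g p α (e₁, e₂) * BS f g p h (d, d₁) = f n * g n₁ / ((n : ℝ) * n₁) := by
      rw [SpS, BS]
      dsimp only
      rw [if_pos hm, if_pos ⟨hd1, hd₁1, hg', hd, hd₁⟩,
        ← Avalue f g hf hg hp hd hd₁ hd1 hd₁1, hnd, hn₁d]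
    refine ⟨⟨((e₁, e₂), (d, d₁)), ?_⟩, ?_⟩
    · rw [Function.mem_support]
      dsimp only
      rw [hv]
      intro h0
      apply hn
      rw [AS]
      dsimp only
      rw [if_pos ⟨hn1, hn11, hgcd⟩]
      exact h0
    · simp only [Prod.mk.injEq]
      exact ⟨hnd, hn₁d⟩
  · rintro ⟨⟨⟨e₁, e₂⟩, d, d₁⟩, hz⟩
    rw [Function.mem_support] at hz
    obtain ⟨hm, hd1, hd₁1, hgd, hpd, hpd₁⟩ := hsupp _ hz
    dsimp only at hm hd1 hd₁1 hgd hpd hpd₁ ⊢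
    have hcond : 1 ≤ p ^ e₁ * d ∧ 1 ≤ p ^ e₂ * d₁ ∧
        Nat.gcd (p ^ e₁ * d) (p ^ e₂ * d₁) = p ^ α * h := by
      refine ⟨Nat.one_le_iff_ne_zero.mpr (Nat.mul_ne_zero (pow_ne_zero _ hp.pos.ne')
          (Nat.one_le_iff_ne_zero.mp hd1)),
        Nat.one_le_iff_ne_zero.mpr (Nat.mul_ne_zero (pow_ne_zero _ hp.pos.ne')
          (Nat.one_le_iff_ne_zero.mp hd₁1)), ?_⟩
      rw [gcd_pow_mul hp e₁ e₂ hpd hpd₁, hm, hgd]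
    rw [AS, if_pos hcond, Avalue f g hf hg hp hpd hpd₁ hd1 hd₁1, SpS, BS]
    dsimp only
    rw [if_pos hm, if_pos ⟨hd1, hd₁1, hgd, hpd, hpd₁⟩]
lemma Tfun_step (f g : ℕ → ℝ) {p : ℕ} (hp : p.Prime) {α h : ℕ} (hα : α ≠ 0)
    (hph : ¬ p ∣ h) (hh : h ≠ 0) :
    Tfun f g (p ^ α * h) = Spair f g p α / Spair f g p 0 * Tfun f g h := by
  have hpn : p ∉ h.primeFactors := fun hq => hph (Nat.dvd_of_mem_primeFactors hq)
  rw [Tfun, Nat.primeFactors_mul (pow_ne_zero α hp.pos.ne') hh,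
    Nat.primeFactors_prime_pow hα hp, ← Finset.insert_eq, Finset.prod_insert hpn,
    fact_pow_mul hp α hph, Tfun]
  congr 1
  apply Finset.prod_congr rfl
  intro q hq
  have hqp : q ≠ p := fun h' => hpn (h' ▸ hq)
  have hfac : (p ^ α * h).factorization q = h.factorization q := by
    rw [Nat.factorization_mul (pow_ne_zero α hp.pos.ne') hh, Finsupp.add_apply,
      hp.factorization_pow, Finsupp.single_eq_of_ne hqp, zero_add]
  rw [hfac]

lemma Amain (f g : ℕ → ℝ)
    (hf : ∀ m n : ℕ, Nat.Coprime m n → f (m * n) = f m * f n)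
    (hg : ∀ m n : ℕ, Nat.Coprime m n → g (m * n) = g m * g n)
    (hfs : Summable fun d : ℕ => |f (d + 1)| / (d + 1))
    (hgs : Summable fun d : ℕ => |g (d + 1)| / (d + 1)) :
    ∀ h₁ : ℕ, 0 < h₁ → (∀ p : ℕ, p.Prime → p ∣ h₁ → Spair f g p 0 ≠ 0) →
      Asum f g h₁ = Tfun f g h₁ * Asum f g 1 := by
  intro h₁
  induction h₁ using Nat.strong_induction_on with
  | _ n ih =>
    intro hn hS
    rcases eq_or_ne n 1 with rfl | hn1
    · rw [Tfun, Nat.primeFactors_one, Finset.prod_empty, one_mul]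
    · have hn0 : n ≠ 0 := hn.ne'
      have hp : n.minFac.Prime := Nat.minFac_prime hn1
      have hpd : n.minFac ∣ n := Nat.minFac_dvd n
      obtain ⟨α, h', hdec, hph', hα0⟩ :
          ∃ a b : ℕ, n.minFac ^ a * b = n ∧ ¬ n.minFac ∣ b ∧ a ≠ 0 :=
        ⟨n.factorization n.minFac, n / n.minFac ^ n.factorization n.minFac,
          Nat.ordProj_mul_ordCompl_eq_self n n.minFac, Nat.not_dvd_ordCompl hp hn0,
          (hp.factorization_pos_of_dvd hn0 hpd).ne'⟩
      have hh'0 : h' ≠ 0 := by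
        rintro rfl
        exact hph' (dvd_zero _)
      have hh'pos : 0 < h' := Nat.pos_of_ne_zero hh'0
      have hh'lt : h' < n := by
        rw [← hdec]
        exact (lt_mul_iff_one_lt_left hh'pos).mpr (Nat.one_lt_pow hα0 hp.one_lt)
      have hS' : ∀ q : ℕ, q.Prime → q ∣ h' → Spair f g q 0 ≠ 0 := fun q hq hqd =>
        hS q hq (hqd.trans (Dvd.intro_left _ hdec))
      have hA' := ih h' hh'lt hh'pos hS'
      have hstep1 : Asum f g (n.minFac ^ α * h') = Spair f g n.minFac α * Bsum f g n.minFac h' :=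
        step_lemma f g hf hg hfs hgs hp α h' hph'
      have hstep0 : Asum f g h' = Spair f g n.minFac 0 * Bsum f g n.minFac h' := by
        have h0 := step_lemma f g hf hg hfs hgs hp 0 h' hph'
        rwa [pow_zero, one_mul] at h0
      have hS0 := hS n.minFac hp hpd
      rw [← hdec, hstep1, Tfun_step f g hp hα0 hph' hh'0]
      rw [hstep0] at hA'
      rw [mul_assoc, ← hA']
      field_simp

theorem gcd_restricted_sum_eq (f g : ℕ → ℝ)
    (hf : ∀ m n : ℕ, Nat.Coprime m n → f (m * n) = f m * f n)
    (hg : ∀ m n : ℕ, Nat.Coprime m n → g (m * n) = g m * g n)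
    (hfs : Summable fun d : ℕ => |f (d + 1)| / (d + 1))
    (hgs : Summable fun d : ℕ => |g (d + 1)| / (d + 1))
    (h₁ : ℕ) (hh₁ : 0 < h₁)
    (hS : ∀ p : ℕ, p.Prime → p ∣ h₁ → Spair f g p 0 ≠ 0) :
    (∑' dd : ℕ × ℕ, if 1 ≤ dd.1 ∧ 1 ≤ dd.2 ∧ Nat.gcd dd.1 dd.2 = h₁ then
        f dd.1 * g dd.2 / ((dd.1 : ℝ) * dd.2) else 0) =
      Tfun f g h₁ *
        ∑' dd : ℕ × ℕ, if 1 ≤ dd.1 ∧ 1 ≤ dd.2 ∧ Nat.gcd dd.1 dd.2 = 1 then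
          f dd.1 * g dd.2 / ((dd.1 : ℝ) * dd.2) else 0 := by
  exact Amain f g hf hg hfs hgs h₁ hh₁ hS
end

section
/- For every positive integer N, K*(N) = C₂*·F*(N−1)·G*(N), where C₂* = ∏_{p>2}(1 − 1/(p−1)²), F*(N) = ∏_{p∣N, p>2}(1 − 1/(p−1)²)^{-1}·∏_{p∣N}(1 − 1/((p−1)²(p+1))), and G*(N) = (N/φ(N))·∏_{p∣N, p>2}(1 − 1/(p−1)²)^{-1}·∏_{p∣N}(1 − 1/(p^{ν_p(N)}(p−1))). -/
/-- The corrected David–Smith constant `K(N)`, with `((N-1)/p)² = 0` if `p ∣ N-1` else `1`. -/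
noncomputable def Kfun (N : ℕ) : ℝ :=
  (∏' p : {p : Nat.Primes // ¬ (p : ℕ) ∣ N},
      (1 - ((if ((p.1 : ℕ) : ℕ) ∣ (N - 1) then (0 : ℝ) else 1) * ((p.1 : ℕ) : ℝ) + 1) /
        ((((p.1 : ℕ) : ℝ) - 1) ^ 2 * (((p.1 : ℕ) : ℝ) + 1)))) *
    ∏ p ∈ N.primeFactors, (1 - 1 / ((p : ℝ) ^ (N.factorization p) * ((p : ℝ) - 1)))

/-- `K*(N) = K(N)·N/φ(N)`. -/
noncomputable def Kstar (N : ℕ) : ℝ := Kfun N * N / Nat.totient N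

/-- `C₂* = ∏_{p > 2} (1 - 1/(p-1)²)`. -/
noncomputable def C2star : ℝ :=
  ∏' p : {p : Nat.Primes // 2 < (p : ℕ)}, (1 - 1 / (((p.1 : ℕ) : ℝ) - 1) ^ 2)

/-- `F*(N) = ∏_{p ∣ N, p > 2} (1 - 1/(p-1)²)⁻¹ · ∏_{p ∣ N} (1 - 1/((p-1)²(p+1)))`. -/
noncomputable def Fstar (N : ℕ) : ℝ :=
  (∏' p : {p : Nat.Primes // (p : ℕ) ∣ N ∧ 2 < (p : ℕ)},
      (1 - 1 / (((p.1 : ℕ) : ℝ) - 1) ^ 2)⁻¹) *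
    ∏' p : {p : Nat.Primes // (p : ℕ) ∣ N},
      (1 - 1 / ((((p.1 : ℕ) : ℝ) - 1) ^ 2 * (((p.1 : ℕ) : ℝ) + 1)))

/-- `G*(N) = (N/φ(N)) ∏_{p ∣ N, p > 2} (1 - 1/(p-1)²)⁻¹ ∏_{p ∣ N} (1 - 1/(p^{ν_p(N)}(p-1)))`. -/
noncomputable def Gstar (N : ℕ) : ℝ :=
  ((N : ℝ) / Nat.totient N) *
    (∏' p : {p : Nat.Primes // (p : ℕ) ∣ N ∧ 2 < (p : ℕ)},
      (1 - 1 / (((p.1 : ℕ) : ℝ) - 1) ^ 2)⁻¹) *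
    ∏' p : {p : Nat.Primes // (p : ℕ) ∣ N},
      (1 - 1 / ((((p.1 : ℕ) : ℝ) ^ (N.factorization (p : ℕ))) * (((p.1 : ℕ) : ℝ) - 1)))

open Real Set

namespace KP

noncomputable def a (p : Nat.Primes) : ℝ := 1 - 1 / (((p:ℕ):ℝ) - 1) ^ 2
noncomputable def b (p : Nat.Primes) : ℝ := 1 - 1 / ((((p:ℕ):ℝ) - 1) ^ 2 * (((p:ℕ):ℝ) + 1))
noncomputable def c (N : ℕ) (p : Nat.Primes) : ℝ :=
  1 - 1 / (((p:ℕ):ℝ) ^ (N.factorization (p:ℕ)) * (((p:ℕ):ℝ) - 1))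
noncomputable def k (N : ℕ) (p : Nat.Primes) : ℝ :=
  1 - ((if ((p:ℕ):ℕ) ∣ (N - 1) then (0:ℝ) else 1) * ((p:ℕ):ℝ) + 1) /
    ((((p:ℕ):ℝ) - 1) ^ 2 * (((p:ℕ):ℝ) + 1))

def P2 : Nat.Primes := ⟨2, Nat.prime_two⟩
def P3 : Nat.Primes := ⟨3, Nat.prime_three⟩

lemma two_le (p : Nat.Primes) : (2:ℝ) ≤ ((p:ℕ):ℝ) := by exact_mod_cast p.2.two_le

lemma abs_log_le {x : ℝ} (h1 : 1/2 ≤ x) : |Real.log x| ≤ 2 * |x - 1| := by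
  have hx : 0 < x := by linarith
  rcases le_or_gt 1 x with h | h
  · rw [abs_of_nonneg (Real.log_nonneg h), abs_of_nonneg (by linarith)]
    have := Real.log_le_sub_one_of_pos hx
    linarith
  · rw [abs_of_nonpos (Real.log_nonpos (le_of_lt hx) (le_of_lt h)),
      abs_of_nonpos (by linarith)]
    have h2 : Real.log x⁻¹ ≤ x⁻¹ - 1 := Real.log_le_sub_one_of_pos (by positivity)
    rw [Real.log_inv] at h2
    have h3 : x * x⁻¹ = 1 := mul_inv_cancel₀ (ne_of_gt hx)
    nlinarith

lemma summable_bound : Summable (fun p : Nat.Primes => 8 / ((p:ℕ):ℝ)^2) := by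
  have h : Summable (fun n : ℕ => 8 / (n:ℝ)^2) := by
    have := (summable_one_div_nat_pow (p := 2)).mpr one_lt_two
    simpa [div_eq_mul_inv] using this.mul_left 8
  exact h.comp_injective Nat.Primes.coe_nat_injective

lemma multipliable_aux (f : Nat.Primes → ℝ) (hpos : ∀ p, 0 < f p)
    (hb : ∀ p : Nat.Primes, 5 ≤ (p:ℕ) → |f p - 1| ≤ 4 / ((p:ℕ):ℝ)^2) :
    Multipliable f := by
  have hlog : Summable (fun p : Nat.Primes => Real.log (f p)) := by
    have hg : Summable (fun p : Nat.Primes =>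
        if 5 ≤ (p:ℕ) then Real.log (f p) else 0) := by
      have hbd : ∀ p : Nat.Primes,
          |if 5 ≤ (p:ℕ) then Real.log (f p) else 0| ≤ 8 / ((p:ℕ):ℝ)^2 := by
        intro p
        by_cases hp5 : 5 ≤ (p:ℕ)
        · have hx5 : (5:ℝ) ≤ ((p:ℕ):ℝ) := by exact_mod_cast hp5
          have hbnd := hb p hp5
          have hxpos : (0:ℝ) < ((p:ℕ):ℝ)^2 := by positivity
          have h425 : 4 / ((p:ℕ):ℝ)^2 ≤ 4/25 := by
            rw [div_le_div_iff₀ hxpos (by norm_num)]; nlinarith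
          have hhalf : 1/2 ≤ f p := by
            have := abs_le.mp hbnd
            linarith [this.1]
          rw [if_pos hp5]
          calc |Real.log (f p)| ≤ 2 * |f p - 1| := abs_log_le hhalf
            _ ≤ 2 * (4 / ((p:ℕ):ℝ)^2) := by linarith
            _ = 8 / ((p:ℕ):ℝ)^2 := by ring
        · rw [if_neg hp5, abs_zero]
          positivity
      exact Summable.of_abs
        (Summable.of_nonneg_of_le (fun _ => abs_nonneg _) hbd summable_bound)
    have hh : Summable (fun p : Nat.Primes =>
        if 5 ≤ (p:ℕ) then 0 else Real.log (f p)) := by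
      apply summable_of_ne_finset_zero (s := ({P2, P3} : Finset Nat.Primes))
      intro p hp
      simp only [Finset.mem_insert, Finset.mem_singleton] at hp
      push_neg at hp
      have h2 : (p:ℕ) ≠ 2 := fun h => hp.1 (Nat.Primes.coe_nat_injective (h.trans rfl))
      have h3 : (p:ℕ) ≠ 3 := fun h => hp.2 (Nat.Primes.coe_nat_injective (h.trans rfl))
      have h4 : (p:ℕ) ≠ 4 := by
        intro h
        have := p.2
        rw [h] at this
        norm_num at this
      have h5 : 5 ≤ (p:ℕ) := by have := p.2.two_le; omega
      simp only [if_pos h5]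
    apply (hg.add hh).congr
    intro p
    by_cases hp5 : 5 ≤ (p:ℕ) <;> simp [hp5]
  exact Real.multipliable_of_summable_log hpos hlog

lemma a_pos {p : Nat.Primes} (h : 2 < (p:ℕ)) : 0 < a p := by
  have hx : (3:ℝ) ≤ ((p:ℕ):ℝ) := by exact_mod_cast h
  have h1 : 1 / (((p:ℕ):ℝ) - 1) ^ 2 < 1 := by
    rw [div_lt_one (by nlinarith)]; nlinarith
  unfold a; linarith

lemma a_ne {p : Nat.Primes} (h : 2 < (p:ℕ)) : a p ≠ 0 := ne_of_gt (a_pos h)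

lemma a_bound {p : Nat.Primes} (h : 5 ≤ (p:ℕ)) : |a p - 1| ≤ 4 / ((p:ℕ):ℝ)^2 := by
  have hx : (5:ℝ) ≤ ((p:ℕ):ℝ) := by exact_mod_cast h
  have : a p - 1 = -(1 / (((p:ℕ):ℝ) - 1) ^ 2) := by unfold a; ring
  rw [this, abs_neg, abs_of_nonneg (by positivity),
    div_le_div_iff₀ (by nlinarith) (by positivity)]
  nlinarith

lemma ainv_bound {p : Nat.Primes} (h : 5 ≤ (p:ℕ)) : |(a p)⁻¹ - 1| ≤ 4 / ((p:ℕ):ℝ)^2 := by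
  set x : ℝ := ((p:ℕ):ℝ) with hx_def
  have hx : (5:ℝ) ≤ x := by rw [hx_def]; exact_mod_cast h
  have hne : x - 1 ≠ 0 := by nlinarith
  have ha : a p = (x^2 - 2*x) / (x-1)^2 := by
    unfold a; rw [← hx_def]; field_simp; ring
  have hd : (0:ℝ) < x^2 - 2*x := by nlinarith
  have hval : (a p)⁻¹ - 1 = 1 / (x^2 - 2*x) := by
    rw [ha, inv_div, div_sub_one (ne_of_gt hd)]
    congr 1; ring
  rw [hval, abs_of_nonneg (by positivity), div_le_div_iff₀ hd (by positivity)]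
  nlinarith

lemma b_pos (p : Nat.Primes) : 0 < b p := by
  have hx := two_le p
  have h1 : 1 / ((((p:ℕ):ℝ) - 1) ^ 2 * (((p:ℕ):ℝ) + 1)) < 1 := by
    rw [div_lt_one (by nlinarith)]; nlinarith
  unfold b; linarith

lemma b_bound {p : Nat.Primes} (h : 5 ≤ (p:ℕ)) : |b p - 1| ≤ 4 / ((p:ℕ):ℝ)^2 := by
  have hx : (5:ℝ) ≤ ((p:ℕ):ℝ) := by exact_mod_cast h
  have : b p - 1 = -(1 / ((((p:ℕ):ℝ) - 1) ^ 2 * (((p:ℕ):ℝ) + 1))) := by unfold b; ring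
  rw [this, abs_neg, abs_of_nonneg (by positivity),
    div_le_div_iff₀ (by nlinarith) (by positivity)]
  nlinarith

lemma c_pos {N : ℕ} {p : Nat.Primes} (hν : 0 < N.factorization (p:ℕ)) : 0 < c N p := by
  have hx := two_le p
  have hxp : ((p:ℕ):ℝ) ≤ ((p:ℕ):ℝ) ^ (N.factorization (p:ℕ)) :=
    le_self_pow₀ (by linarith) hν.ne'
  have h1 : 1 / (((p:ℕ):ℝ) ^ (N.factorization (p:ℕ)) * (((p:ℕ):ℝ) - 1)) < 1 := by
    rw [div_lt_one (by nlinarith)]; nlinarith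
  unfold c; linarith

lemma c_bound {N : ℕ} {p : Nat.Primes} (hν : 0 < N.factorization (p:ℕ))
    (h : 5 ≤ (p:ℕ)) : |c N p - 1| ≤ 4 / ((p:ℕ):ℝ)^2 := by
  have hx : (5:ℝ) ≤ ((p:ℕ):ℝ) := by exact_mod_cast h
  have hxp : ((p:ℕ):ℝ) ≤ ((p:ℕ):ℝ) ^ (N.factorization (p:ℕ)) :=
    le_self_pow₀ (by linarith) hν.ne'
  have : c N p - 1 = -(1 / (((p:ℕ):ℝ) ^ (N.factorization (p:ℕ)) * (((p:ℕ):ℝ) - 1))) := by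
    unfold c; ring
  rw [this, abs_neg, abs_of_nonneg (div_nonneg (by norm_num) (by nlinarith)),
    div_le_div_iff₀ (by nlinarith) (by positivity)]
  nlinarith

lemma k_eq_b {N : ℕ} {p : Nat.Primes} (h : (p:ℕ) ∣ (N-1)) : k N p = b p := by
  unfold k b
  rw [if_pos h, zero_mul, zero_add]

lemma k_eq_a {N : ℕ} {p : Nat.Primes} (h : ¬(p:ℕ) ∣ (N-1)) (h2 : 2 < (p:ℕ)) :
    k N p = a p := by
  have hx : (3:ℝ) ≤ ((p:ℕ):ℝ) := by exact_mod_cast h2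
  unfold k a
  rw [if_neg h, one_mul]
  congr 1
  rw [div_eq_div_iff (by nlinarith) (by nlinarith)]
  ring

lemma odd_of_not_dvd {N : ℕ} (_hN : 0 < N) {p : Nat.Primes} (h1 : ¬(p:ℕ) ∣ N)
    (h2 : ¬(p:ℕ) ∣ (N-1)) : 2 < (p:ℕ) := by
  rcases lt_or_ge 2 (p:ℕ) with h | h
  · exact h
  · exfalso
    have hp2 : (p:ℕ) = 2 := le_antisymm h p.2.two_le
    rcases Nat.even_or_odd N with he | ho
    · exact h1 (hp2 ▸ he.two_dvd)
    · have : Even (N - 1) := Nat.Odd.sub_odd ho odd_one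
      exact h2 (hp2 ▸ this.two_dvd)

lemma k_pos {N : ℕ} (hN : 0 < N) {p : Nat.Primes} (h1 : ¬(p:ℕ) ∣ N) : 0 < k N p := by
  by_cases hd : (p:ℕ) ∣ (N-1)
  · rw [k_eq_b hd]; exact b_pos p
  · rw [k_eq_a hd (odd_of_not_dvd hN h1 hd)]
    exact a_pos (odd_of_not_dvd hN h1 hd)

lemma k_bound {N : ℕ} {p : Nat.Primes} (h5 : 5 ≤ (p:ℕ)) : |k N p - 1| ≤ 4 / ((p:ℕ):ℝ)^2 := by
  by_cases hd : (p:ℕ) ∣ (N-1)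
  · rw [k_eq_b hd]; exact b_bound h5
  · rw [k_eq_a hd (by omega)]; exact a_bound h5

lemma mulIndicator_multipliable (s : Set Nat.Primes) (f : Nat.Primes → ℝ)
    (hpos : ∀ p ∈ s, 0 < f p)
    (hb : ∀ p ∈ s, 5 ≤ (p:ℕ) → |f p - 1| ≤ 4 / ((p:ℕ):ℝ)^2) :
    Multipliable (s.mulIndicator f) := by
  apply multipliable_aux
  · intro p
    by_cases h : p ∈ s
    · rw [Set.mulIndicator_of_mem h]; exact hpos p h
    · rw [Set.mulIndicator_of_notMem h]; norm_num
  · intro p h5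
    by_cases h : p ∈ s
    · rw [Set.mulIndicator_of_mem h]; exact hb p h h5
    · rw [Set.mulIndicator_of_notMem h]
      simp only [sub_self, abs_zero]
      positivity

lemma pointwise (N : ℕ) (hN : 0 < N) (q : Nat.Primes) :
    mulIndicator {r : Nat.Primes | ¬(r:ℕ) ∣ N} (k N) q *
      mulIndicator {r : Nat.Primes | (r:ℕ) ∣ N} (c N) q
    = mulIndicator {r : Nat.Primes | 2 < (r:ℕ)} a q *
      (mulIndicator {r : Nat.Primes | (r:ℕ) ∣ (N-1) ∧ 2 < (r:ℕ)} (fun p => (a p)⁻¹) q *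
       (mulIndicator {r : Nat.Primes | (r:ℕ) ∣ (N-1)} b q *
        (mulIndicator {r : Nat.Primes | (r:ℕ) ∣ N ∧ 2 < (r:ℕ)} (fun p => (a p)⁻¹) q *
         mulIndicator {r : Nat.Primes | (r:ℕ) ∣ N} (c N) q))) := by
  by_cases hdvd : (q:ℕ) ∣ N
  · have hnd : ¬(q:ℕ) ∣ (N-1) := by
      intro h
      have h1 : (q:ℕ) ∣ N - (N-1) := Nat.dvd_sub hdvd h
      rw [Nat.sub_sub_self hN] at h1
      exact q.2.one_lt.ne' (Nat.dvd_one.mp h1)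
    by_cases h2 : 2 < (q:ℕ)
    · simp only [Set.mulIndicator_apply, Set.mem_setOf_eq, hdvd, hnd, h2, if_true,
        and_true, true_and, and_false, false_and, if_false, not_true, not_false_iff]
      rw [one_mul, one_mul, one_mul, ← mul_assoc, mul_inv_cancel₀ (a_ne h2), one_mul]
    · simp only [Set.mulIndicator_apply, Set.mem_setOf_eq, hdvd, hnd, h2, if_true,
        and_true, true_and, and_false, false_and, if_false, not_true, not_false_iff]
      ring
  · by_cases hd1 : (q:ℕ) ∣ (N-1)
    · simp only [Set.mulIndicator_apply, Set.mem_setOf_eq, hdvd, hd1, if_true,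
        and_true, true_and, and_false, false_and, if_false, not_true, not_false_iff,
        k_eq_b hd1]
      by_cases h2 : 2 < (q:ℕ)
      · simp only [h2, if_true]
        rw [← mul_assoc, mul_inv_cancel₀ (a_ne h2), one_mul]
        ring
      · simp only [h2, if_false]
        ring
    · have h2 : 2 < (q:ℕ) := odd_of_not_dvd hN hdvd hd1
      simp only [Set.mulIndicator_apply, Set.mem_setOf_eq, hdvd, hd1, h2, if_true,
        and_true, true_and, and_false, false_and, if_false, not_true, not_false_iff,
        k_eq_a hd1 h2]
      ring
lemma finprod_eq (N : ℕ) (hN : N ≠ 0) :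
    (∏ p ∈ N.primeFactors, (1 - 1 / ((p : ℝ) ^ (N.factorization p) * ((p : ℝ) - 1))))
    = ∏' q : Nat.Primes, mulIndicator {r : Nat.Primes | (r:ℕ) ∣ N} (c N) q := by
  classical
  set S : Finset Nat.Primes := N.primeFactors.attach.map
    ⟨fun q => (⟨q.1, Nat.prime_of_mem_primeFactors q.2⟩ : Nat.Primes),
     by
       intro u v h
       exact Subtype.ext (congrArg (fun r : Nat.Primes => (r : ℕ)) h)⟩ with hS
  rw [tprod_eq_prod (s := S)]
  · rw [hS, Finset.prod_map]
    rw [← Finset.prod_attach (s := N.primeFactors)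
        (f := fun p => (1 - 1 / ((p : ℝ) ^ (N.factorization p) * ((p : ℝ) - 1))))]
    apply Finset.prod_congr rfl
    intro q _
    have hmem : (⟨q.1, Nat.prime_of_mem_primeFactors q.2⟩ : Nat.Primes) ∈
        {r : Nat.Primes | (r:ℕ) ∣ N} := Nat.dvd_of_mem_primeFactors q.2
    exact (Set.mulIndicator_of_mem hmem (c N)).symm
  · intro q hq
    apply Set.mulIndicator_of_notMem
    intro hmem
    apply hq
    rw [hS, Finset.mem_map]
    refine ⟨⟨(q:ℕ), Nat.mem_primeFactors.mpr ⟨q.2, hmem, hN⟩⟩, Finset.mem_attach _ _, rfl⟩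

end KP

open KP Set in
theorem Kstar_factorization (N : ℕ) (hN : 0 < N) :
    Kstar N = C2star * Fstar (N - 1) * Gstar N := by
  have hA : Multipliable (mulIndicator {r : Nat.Primes | 2 < (r:ℕ)} a) :=
    mulIndicator_multipliable _ _ (fun p h => a_pos h) (fun p _ h5 => a_bound h5)
  have hI1 : Multipliable (mulIndicator {r : Nat.Primes | (r:ℕ) ∣ (N-1) ∧ 2 < (r:ℕ)}
      (fun p => (a p)⁻¹)) :=
    mulIndicator_multipliable _ _ (fun p h => inv_pos.mpr (a_pos h.2))
      (fun p _ h5 => ainv_bound h5)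
  have hI2 : Multipliable (mulIndicator {r : Nat.Primes | (r:ℕ) ∣ N ∧ 2 < (r:ℕ)}
      (fun p => (a p)⁻¹)) :=
    mulIndicator_multipliable _ _ (fun p h => inv_pos.mpr (a_pos h.2))
      (fun p _ h5 => ainv_bound h5)
  have hB : Multipliable (mulIndicator {r : Nat.Primes | (r:ℕ) ∣ (N-1)} b) :=
    mulIndicator_multipliable _ _ (fun p _ => b_pos p) (fun p _ h5 => b_bound h5)
  have hC : Multipliable (mulIndicator {r : Nat.Primes | (r:ℕ) ∣ N} (c N)) :=
    mulIndicator_multipliable _ _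
      (fun p h => c_pos (Nat.Prime.factorization_pos_of_dvd p.2 hN.ne' h))
      (fun p h h5 => c_bound (Nat.Prime.factorization_pos_of_dvd p.2 hN.ne' h) h5)
  have hK : Multipliable (mulIndicator {r : Nat.Primes | ¬(r:ℕ) ∣ N} (k N)) :=
    mulIndicator_multipliable _ _ (fun p h => k_pos hN h) (fun p _ h5 => k_bound h5)
  have e1 : (∏' p : {p : Nat.Primes // ¬ (p : ℕ) ∣ N},
      (1 - ((if ((p.1 : ℕ) : ℕ) ∣ (N - 1) then (0 : ℝ) else 1) * ((p.1 : ℕ) : ℝ) + 1) /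
        ((((p.1 : ℕ) : ℝ) - 1) ^ 2 * (((p.1 : ℕ) : ℝ) + 1))))
      = ∏' q : Nat.Primes, mulIndicator {r : Nat.Primes | ¬(r:ℕ) ∣ N} (k N) q :=
    tprod_subtype {r : Nat.Primes | ¬(r:ℕ) ∣ N} (k N)
  have e2 : (∏' p : {p : Nat.Primes // 2 < (p : ℕ)}, (1 - 1 / (((p.1 : ℕ) : ℝ) - 1) ^ 2))
      = ∏' q : Nat.Primes, mulIndicator {r : Nat.Primes | 2 < (r:ℕ)} a q :=
    tprod_subtype {r : Nat.Primes | 2 < (r:ℕ)} a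
  have e3 : (∏' p : {p : Nat.Primes // (p : ℕ) ∣ (N-1) ∧ 2 < (p : ℕ)},
      (1 - 1 / (((p.1 : ℕ) : ℝ) - 1) ^ 2)⁻¹)
      = ∏' q : Nat.Primes, mulIndicator {r : Nat.Primes | (r:ℕ) ∣ (N-1) ∧ 2 < (r:ℕ)}
          (fun p => (a p)⁻¹) q :=
    tprod_subtype {r : Nat.Primes | (r:ℕ) ∣ (N-1) ∧ 2 < (r:ℕ)} (fun p => (a p)⁻¹)
  have e4 : (∏' p : {p : Nat.Primes // (p : ℕ) ∣ (N-1)},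
      (1 - 1 / ((((p.1 : ℕ) : ℝ) - 1) ^ 2 * (((p.1 : ℕ) : ℝ) + 1))))
      = ∏' q : Nat.Primes, mulIndicator {r : Nat.Primes | (r:ℕ) ∣ (N-1)} b q :=
    tprod_subtype {r : Nat.Primes | (r:ℕ) ∣ (N-1)} b
  have e5 : (∏' p : {p : Nat.Primes // (p : ℕ) ∣ N ∧ 2 < (p : ℕ)},
      (1 - 1 / (((p.1 : ℕ) : ℝ) - 1) ^ 2)⁻¹)
      = ∏' q : Nat.Primes, mulIndicator {r : Nat.Primes | (r:ℕ) ∣ N ∧ 2 < (r:ℕ)}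
          (fun p => (a p)⁻¹) q :=
    tprod_subtype {r : Nat.Primes | (r:ℕ) ∣ N ∧ 2 < (r:ℕ)} (fun p => (a p)⁻¹)
  have e6 : (∏' p : {p : Nat.Primes // (p : ℕ) ∣ N},
      (1 - 1 / ((((p.1 : ℕ) : ℝ) ^ (N.factorization (p : ℕ))) * (((p.1 : ℕ) : ℝ) - 1))))
      = ∏' q : Nat.Primes, mulIndicator {r : Nat.Primes | (r:ℕ) ∣ N} (c N) q :=
    tprod_subtype {r : Nat.Primes | (r:ℕ) ∣ N} (c N)
  have H : (∏' q : Nat.Primes, mulIndicator {r : Nat.Primes | ¬(r:ℕ) ∣ N} (k N) q) *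
      (∏' q : Nat.Primes, mulIndicator {r : Nat.Primes | (r:ℕ) ∣ N} (c N) q)
      = (∏' q : Nat.Primes, mulIndicator {r : Nat.Primes | 2 < (r:ℕ)} a q) *
        ((∏' q : Nat.Primes, mulIndicator {r : Nat.Primes | (r:ℕ) ∣ (N-1) ∧ 2 < (r:ℕ)}
            (fun p => (a p)⁻¹) q) *
         ((∏' q : Nat.Primes, mulIndicator {r : Nat.Primes | (r:ℕ) ∣ (N-1)} b q) *
          ((∏' q : Nat.Primes, mulIndicator {r : Nat.Primes | (r:ℕ) ∣ N ∧ 2 < (r:ℕ)}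
              (fun p => (a p)⁻¹) q) *
           (∏' q : Nat.Primes, mulIndicator {r : Nat.Primes | (r:ℕ) ∣ N} (c N) q)))) := by
    rw [← Multipliable.tprod_mul hK hC, ← Multipliable.tprod_mul hI2 hC, ← Multipliable.tprod_mul hB (hI2.mul hC),
      ← Multipliable.tprod_mul hI1 (hB.mul (hI2.mul hC)), ← Multipliable.tprod_mul hA (hI1.mul (hB.mul (hI2.mul hC)))]
    exact tprod_congr (pointwise N hN)
  unfold Kstar Kfun C2star Fstar Gstar
  rw [e1, e2, e3, e4, e5, e6, finprod_eq N hN.ne']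
  rw [div_eq_mul_inv, div_eq_mul_inv, mul_assoc]
  rw [H]
  ring
end

section
/- Let G₂* be the multiplicative function G₂*(N) = (N/φ(N))·∏_{p∣N, p>2}(1 − 1/(p−1)²)^{-1}·∏_{p^α ∥ N, α odd}(1 − 1/(p^α(p−1))), and write G₂*(N) = ∑_{l ∣ N} ĝ(l). Then ĝ is multiplicative with, for odd primes p: ĝ(p) = (p−1)/(p(p−2)), ĝ(p^{2s}) = 1/(p^{2s−1}(p−2)) for s ≥ 1, ĝ(p^{2s+1}) = −1/(p^{2s+1}(p−2)) for s ≥ 1; and at p = 2: ĝ(2) = 0, ĝ(2^{2s}) = 1/2^{2s−2} for s ≥ 1, ĝ(2^{2s+1}) = −1/2^{2s} for s ≥ 1. -/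
/-- `G₂*(N) = (N/φ(N)) ∏_{p∣N, p>2}(1 - 1/(p-1)²)⁻¹ ∏_{p^α ∥ N, α odd}(1 - 1/(p^α(p-1)))`. -/
noncomputable def G2star (N : ℕ) : ℝ :=
  ((N : ℝ) / Nat.totient N) *
    (∏ p ∈ N.primeFactors.filter (fun p => 2 < p), (1 - 1 / ((p : ℝ) - 1) ^ 2)⁻¹) *
    ∏ p ∈ N.primeFactors.filter (fun p => Odd (N.factorization p)),
      (1 - 1 / ((p : ℝ) ^ (N.factorization p) * ((p : ℝ) - 1)))

/-- `ĝ = μ ∗ G₂*`, so that `G₂*(n) = ∑_{l ∣ n} ĝ(l)`. -/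
noncomputable def ghat (m : ℕ) : ℝ :=
  ∑ d ∈ m.divisors, (ArithmeticFunction.moebius d : ℝ) * G2star (m / d)

lemma G2star_one : G2star 1 = 1 := by simp [G2star]

lemma G2star_zero : G2star 0 = 0 := by simp [G2star]

lemma G2star_mul {m n : ℕ} (hm : m ≠ 0) (hn : n ≠ 0) (h : m.Coprime n) :
    G2star (m * n) = G2star m * G2star n := by
  have hpf : (m * n).primeFactors = m.primeFactors ∪ n.primeFactors :=
    Nat.primeFactors_mul hm hn
  have hdisj : Disjoint m.primeFactors n.primeFactors := h.disjoint_primeFactors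
  have hfm : ∀ p ∈ m.primeFactors, (m * n).factorization p = m.factorization p := by
    intro p hp
    have h0 : n.factorization p = 0 := by
      rw [← Finsupp.notMem_support_iff, Nat.support_factorization]
      exact fun hc => Finset.disjoint_left.mp hdisj hp hc
    rw [Nat.factorization_mul hm hn]; simp [h0]
  have hfn : ∀ p ∈ n.primeFactors, (m * n).factorization p = n.factorization p := by
    intro p hp
    have h0 : m.factorization p = 0 := by
      rw [← Finsupp.notMem_support_iff, Nat.support_factorization]
      exact fun hc => Finset.disjoint_left.mp hdisj hc hp
    rw [Nat.factorization_mul hm hn]; simp [h0]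
  unfold G2star
  rw [hpf, Finset.filter_union, Finset.filter_union,
    Finset.prod_union (hdisj.mono (Finset.filter_subset _ _) (Finset.filter_subset _ _)),
    Finset.prod_union (hdisj.mono (Finset.filter_subset _ _) (Finset.filter_subset _ _)),
    Nat.totient_mul h]
  have e1 : (m.primeFactors.filter fun p => Odd ((m*n).factorization p))
      = m.primeFactors.filter fun p => Odd (m.factorization p) :=
    Finset.filter_congr fun p hp => by rw [hfm p hp]
  have e2 : (n.primeFactors.filter fun p => Odd ((m*n).factorization p))
      = n.primeFactors.filter fun p => Odd (n.factorization p) :=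
    Finset.filter_congr fun p hp => by rw [hfn p hp]
  rw [e1, e2]
  have e3 : ∀ p ∈ m.primeFactors.filter fun p => Odd (m.factorization p),
      (1 - 1 / ((p : ℝ) ^ ((m*n).factorization p) * ((p : ℝ) - 1)))
        = (1 - 1 / ((p : ℝ) ^ (m.factorization p) * ((p : ℝ) - 1))) := by
    intro p hp; rw [hfm p (Finset.mem_filter.mp hp).1]
  have e4 : ∀ p ∈ n.primeFactors.filter fun p => Odd (n.factorization p),
      (1 - 1 / ((p : ℝ) ^ ((m*n).factorization p) * ((p : ℝ) - 1)))
        = (1 - 1 / ((p : ℝ) ^ (n.factorization p) * ((p : ℝ) - 1))) := by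
    intro p hp; rw [hfn p (Finset.mem_filter.mp hp).1]
  rw [Finset.prod_congr rfl e3, Finset.prod_congr rfl e4]
  push_cast
  rw [mul_div_mul_comm]
  ring

noncomputable def G2 : ArithmeticFunction ℝ := ⟨G2star, G2star_zero⟩

lemma G2_isMult : G2.IsMultiplicative := by
  refine ⟨G2star_one, ?_⟩
  intro m n h
  rcases eq_or_ne m 0 with rfl | hm
  · obtain rfl := Nat.coprime_zero_left n |>.mp h
    show G2star 0 = G2star 0 * G2star 1
    rw [G2star_zero, G2star_one, mul_one]
  rcases eq_or_ne n 0 with rfl | hn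
  · obtain rfl := Nat.coprime_zero_right m |>.mp h
    show G2star 0 = G2star 1 * G2star 0
    rw [G2star_zero, G2star_one, one_mul]
  exact G2star_mul hm hn h

lemma ghat_eq (m : ℕ) : ghat m =
    (((ArithmeticFunction.moebius : ArithmeticFunction ℤ) : ArithmeticFunction ℝ) * G2) m := by
  rw [ArithmeticFunction.mul_apply,
    Nat.sum_divisorsAntidiagonal
      (fun d e => ((ArithmeticFunction.moebius : ArithmeticFunction ℤ) : ArithmeticFunction ℝ) d * G2 e)]
  unfold ghat
  refine Finset.sum_congr rfl fun d _ => ?_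
  simp [ArithmeticFunction.intCoe_apply, G2]

lemma ghat_mult {m n : ℕ} (h : Nat.Coprime m n) : ghat (m * n) = ghat m * ghat n := by
  simp only [ghat_eq]
  exact ((ArithmeticFunction.isMultiplicative_moebius.intCast).mul G2_isMult).2 h

lemma ghat_pp {p k : ℕ} (hp : p.Prime) (hk : 1 ≤ k) :
    ghat (p ^ k) = G2star (p ^ k) - G2star (p ^ (k - 1)) := by
  unfold ghat
  rw [Nat.sum_divisors_prime_pow hp]
  have key : ∀ i ∈ Finset.range (k + 1),
      (ArithmeticFunction.moebius (p ^ i) : ℝ) * G2star (p ^ k / p ^ i)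
        = (if i = 0 then G2star (p ^ k) else if i = 1 then -G2star (p ^ (k - 1)) else 0) := by
    intro i hi
    rw [Finset.mem_range] at hi
    have hdiv : p ^ k / p ^ i = p ^ (k - i) := Nat.pow_div (by omega) hp.pos
    match i with
    | 0 => simp [hdiv]
    | 1 =>
      have hdiv1 : p ^ k / p = p ^ (k - 1) := by simpa using hdiv
      simp [hdiv1, ArithmeticFunction.moebius_apply_prime hp]
    | (i + 2) =>
      rw [ArithmeticFunction.moebius_apply_prime_pow hp (by omega)]
      simp
  rw [Finset.sum_congr rfl key, Finset.range_eq_Ico,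
    ← Finset.sum_Ico_consecutive _ (Nat.zero_le 2) (by omega : 2 ≤ k + 1)]
  have hz : (∑ i ∈ Finset.Ico 2 (k + 1),
      if i = 0 then G2star (p ^ k) else if i = 1 then -G2star (p ^ (k - 1)) else 0) = 0 :=
    Finset.sum_eq_zero (fun i hi => by
      rw [Finset.mem_Ico] at hi
      rw [if_neg (by omega), if_neg (by omega)])
  rw [hz, add_zero]
  rw [show Finset.Ico 0 2 = Finset.range 2 from rfl]
  simp [Finset.sum_range_succ]
  ring

lemma G2star_pp {p k : ℕ} (hp : p.Prime) (hk : k ≠ 0) :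
    G2star (p ^ k) = ((p : ℝ) / ((p : ℝ) - 1)) *
      (if 2 < p then (1 - 1 / ((p : ℝ) - 1) ^ 2)⁻¹ else 1) *
      (if Odd k then 1 - 1 / ((p : ℝ) ^ k * ((p : ℝ) - 1)) else 1) := by
  obtain ⟨j, rfl⟩ : ∃ j, k = j + 1 := ⟨k - 1, by omega⟩
  have hp0 : (p : ℝ) ≠ 0 := Nat.cast_ne_zero.mpr hp.pos.ne'
  have hf : (p ^ (j + 1)).factorization p = j + 1 := by
    rw [hp.factorization_pow]; simp
  have htot : (((p ^ (j + 1)).totient : ℕ) : ℝ) = (p : ℝ) ^ j * ((p : ℝ) - 1) := by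
    rw [Nat.totient_prime_pow hp (Nat.pos_of_ne_zero hk), Nat.cast_mul, Nat.cast_pow,
      Nat.cast_sub hp.one_lt.le, Nat.cast_one, Nat.add_sub_cancel]
  have hratio : ((p ^ (j + 1) : ℕ) : ℝ) / (((p ^ (j + 1)).totient : ℕ) : ℝ)
      = (p : ℝ) / ((p : ℝ) - 1) := by
    rw [htot, Nat.cast_pow, pow_succ, mul_div_mul_left _ _ (pow_ne_zero _ hp0)]
  unfold G2star
  rw [Nat.primeFactors_prime_pow hk hp, Finset.filter_singleton, Finset.filter_singleton, hratio]
  simp only [hf]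
  split_ifs <;> simp only [Finset.prod_singleton, Finset.prod_empty, hf] 
theorem ghat_prime_powers :
    (∀ m n : ℕ, Nat.Coprime m n → ghat (m * n) = ghat m * ghat n) ∧
    (∀ p : ℕ, p.Prime → 2 < p →
      ghat p = ((p : ℝ) - 1) / ((p : ℝ) * ((p : ℝ) - 2))) ∧
    (∀ p s : ℕ, p.Prime → 2 < p → 1 ≤ s →
      ghat (p ^ (2 * s)) = 1 / ((p : ℝ) ^ (2 * s - 1) * ((p : ℝ) - 2))) ∧
    (∀ p s : ℕ, p.Prime → 2 < p → 1 ≤ s →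
      ghat (p ^ (2 * s + 1)) = -(1 / ((p : ℝ) ^ (2 * s + 1) * ((p : ℝ) - 2)))) ∧
    ghat 2 = 0 ∧
    (∀ s : ℕ, 1 ≤ s → ghat (2 ^ (2 * s)) = 1 / 2 ^ (2 * s - 2)) ∧
    (∀ s : ℕ, 1 ≤ s → ghat (2 ^ (2 * s + 1)) = -(1 / 2 ^ (2 * s))) := by
  have two_prime : Nat.Prime 2 := Nat.prime_two
  refine ⟨fun m n h => ghat_mult h, ?_, ?_, ?_, ?_, ?_, ?_⟩
  · -- ghat p for odd prime
    intro p hp h2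
    have h3 : (3 : ℝ) ≤ (p : ℝ) := by exact_mod_cast h2
    have hP0 : (p : ℝ) ≠ 0 := by linarith
    have hP1 : (p : ℝ) - 1 ≠ 0 := by intro h; nlinarith
    have hP2 : (p : ℝ) - 2 ≠ 0 := by intro h; nlinarith
    have hA : (1 - 1 / ((p : ℝ) - 1) ^ 2) = (p : ℝ) * ((p : ℝ) - 2) / ((p : ℝ) - 1) ^ 2 := by
      field_simp; ring
    conv_lhs => rw [← pow_one p]
    rw [ghat_pp hp le_rfl, G2star_pp hp one_ne_zero, if_pos h2, if_pos odd_one,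
      Nat.sub_self, pow_zero, G2star_one, hA, inv_div, pow_one]
    field_simp
    ring
  · -- ghat (p^(2s)) for odd prime
    intro p s hp h2 hs
    obtain ⟨j, rfl⟩ : ∃ j, s = j + 1 := ⟨s - 1, by omega⟩
    have h3 : (3 : ℝ) ≤ (p : ℝ) := by exact_mod_cast h2
    have hP0 : (p : ℝ) ≠ 0 := by linarith
    have hP1 : (p : ℝ) - 1 ≠ 0 := by intro h; nlinarith
    have hP2 : (p : ℝ) - 2 ≠ 0 := by intro h; nlinarith
    have hA : (1 - 1 / ((p : ℝ) - 1) ^ 2) = (p : ℝ) * ((p : ℝ) - 2) / ((p : ℝ) - 1) ^ 2 := by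
      field_simp; ring
    rw [show 2 * (j + 1) = 2 * j + 2 by omega]
    rw [ghat_pp hp (by omega), show 2 * j + 2 - 1 = 2 * j + 1 by omega,
      G2star_pp hp (by omega), G2star_pp hp (by omega), if_pos h2,
      if_neg (by rw [Nat.odd_iff]; omega : ¬ Odd (2 * j + 2)),
      if_pos (by rw [Nat.odd_iff]; omega : Odd (2 * j + 1)), hA, inv_div]
    field_simp
    ring
  · -- ghat (p^(2s+1)) for odd prime
    intro p s hp h2 hs
    obtain ⟨j, rfl⟩ : ∃ j, s = j + 1 := ⟨s - 1, by omega⟩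
    have h3 : (3 : ℝ) ≤ (p : ℝ) := by exact_mod_cast h2
    have hP0 : (p : ℝ) ≠ 0 := by linarith
    have hP1 : (p : ℝ) - 1 ≠ 0 := by intro h; nlinarith
    have hP2 : (p : ℝ) - 2 ≠ 0 := by intro h; nlinarith
    have hA : (1 - 1 / ((p : ℝ) - 1) ^ 2) = (p : ℝ) * ((p : ℝ) - 2) / ((p : ℝ) - 1) ^ 2 := by
      field_simp; ring
    rw [show 2 * (j + 1) + 1 = 2 * j + 3 by omega]
    rw [ghat_pp hp (by omega), show 2 * j + 3 - 1 = 2 * j + 2 by omega,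
      G2star_pp hp (by omega), G2star_pp hp (by omega), if_pos h2,
      if_pos (by rw [Nat.odd_iff]; omega : Odd (2 * j + 3)),
      if_neg (by rw [Nat.odd_iff]; omega : ¬ Odd (2 * j + 2)), hA, inv_div]
    field_simp
    ring
  · -- ghat 2
    conv_lhs => rw [show (2 : ℕ) = 2 ^ 1 by norm_num]
    rw [ghat_pp two_prime le_rfl, G2star_pp two_prime one_ne_zero,
      if_neg (by norm_num : ¬ (2 : ℕ) < 2), if_pos odd_one, Nat.sub_self, pow_zero, G2star_one]
    norm_num
  · -- ghat (2^(2s))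
    intro s hs
    obtain ⟨j, rfl⟩ : ∃ j, s = j + 1 := ⟨s - 1, by omega⟩
    rw [show 2 * (j + 1) = 2 * j + 2 by omega]
    rw [ghat_pp two_prime (by omega), show 2 * j + 2 - 1 = 2 * j + 1 by omega,
      show 2 * j + 2 - 2 = 2 * j by omega,
      G2star_pp two_prime (by omega), G2star_pp two_prime (by omega),
      if_neg (by norm_num : ¬ (2 : ℕ) < 2),
      if_neg (by rw [Nat.odd_iff]; omega : ¬ Odd (2 * j + 2)),
      if_pos (by rw [Nat.odd_iff]; omega : Odd (2 * j + 1))]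
    have h20 : (2 : ℝ) ≠ 0 := by norm_num
    push_cast
    field_simp
    ring
  · -- ghat (2^(2s+1))
    intro s hs
    obtain ⟨j, rfl⟩ : ∃ j, s = j + 1 := ⟨s - 1, by omega⟩
    rw [show 2 * (j + 1) + 1 = 2 * j + 3 by omega, show 2 * (j + 1) = 2 * j + 2 by omega]
    rw [ghat_pp two_prime (by omega), show 2 * j + 3 - 1 = 2 * j + 2 by omega,
      G2star_pp two_prime (by omega), G2star_pp two_prime (by omega),
      if_neg (by norm_num : ¬ (2 : ℕ) < 2),
      if_pos (by rw [Nat.odd_iff]; omega : Odd (2 * j + 3)),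
      if_neg (by rw [Nat.odd_iff]; omega : ¬ Odd (2 * j + 2))]
    have h20 : (2 : ℝ) ≠ 0 := by norm_num
    push_cast
    field_simp
    ring
end
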